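/- arXiv:2103.06075 — 2 statements merged into one kernel-verified Lean document; each statement's English description precedes it below -/
import Mathlib

section
/- Let {Y_{ij}}_{i≥1, j≥1} be an array of independent and identically distributed random variables with E(Y_{11}) = 0, E(Y_{11}²) = 1 and E|Y_{11}|^r < ∞ for some r ≥ 3. Let X_{in} = n^{-1/2} Σ_{j=1}^n Y_{ij}. Then for any ε > 0, max_{1≤i≤n} |X_{in}| = O_p(n^{1/(2r)+ε}); in particular, for every α > 0, P(max_{1≤i≤n} |X_{in}| ≥ α n^{1/(2r)+ε}) → 0 as n → ∞. -/
/-!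
Truncate every entry at level `a`. The probability that one of the `N²` entries of the
`N × N` block exceeds `a` is at most `N² E|Y|^r / a^r` (Markov), and truncation moves the mean
of a row sum by at most `N E|Y|^r / a^(r-1)`. Since `e^u ≤ 1 + u + u²` for `|u| ≤ 1`, the
centred truncated entries have moment generating function at most `exp (t² E Y²)` for
`0 ≤ t ≤ 1 / (2a)`, which gives a Bernstein-type tail bound for each truncated row sum. With
`a = N^γ`, `γ = 1/(2r) + 1/2 + ε/2`, one has `γ r > 2` and `N^γ N^(ε/2) = N^(1/(2r)+ε) √N`,
and a union bound over the `N` rows sends every error term to `0`.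
-/

open MeasureTheory ProbabilityTheory Filter Real Finset
open scoped Topology

section Bernstein

variable {Ω ι : Type*} [MeasurableSpace Ω] {μ : Measure Ω}

lemma integrable_exp_mul_of_abs_le [IsFiniteMeasure μ] {V : Ω → ℝ} (hV : Measurable V) {b t : ℝ}
    (htV : ∀ ω, |t * V ω| ≤ b) : Integrable (fun ω => exp (t * V ω)) μ :=
  .of_bound (by fun_prop) (exp b) <| ae_of_all _ fun ω => by
    rw [norm_of_nonneg (exp_pos _).le, exp_le_exp]
    exact (le_abs_self _).trans (htV ω)

variable [IsProbabilityMeasure μ]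

lemma mgf_le_exp_mul_integral_sq {V : Ω → ℝ} (hV : Measurable V) {b t : ℝ}
    (hb : ∀ ω, |V ω| ≤ b) (h0 : μ[V] = 0) (ht : |t| * b ≤ 1) :
    mgf V μ t ≤ exp (t ^ 2 * ∫ ω, V ω ^ 2 ∂μ) := by
  have htV : ∀ ω, |t * V ω| ≤ 1 := fun ω => by
    rw [abs_mul]; exact (mul_le_mul_of_nonneg_left (hb ω) (abs_nonneg t)).trans ht
  have hVi : Integrable V μ :=
    .of_bound hV.aestronglyMeasurable b (ae_of_all _ fun ω => (hb ω))
  have hV2i : Integrable (fun ω => V ω ^ 2) μ :=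
    .of_bound (by fun_prop) (b ^ 2) <| ae_of_all _ fun ω => by
      rw [norm_pow, Real.norm_eq_abs]
      exact pow_le_pow_left₀ (abs_nonneg _) (hb ω) 2
  calc mgf V μ t = ∫ ω, exp (t * V ω) ∂μ := rfl
    _ ≤ ∫ ω, (1 + t * V ω + t ^ 2 * V ω ^ 2) ∂μ := by
        refine integral_mono (integrable_exp_mul_of_abs_le hV htV)
          (((integrable_const 1).add (hVi.const_mul t)).add (hV2i.const_mul _)) fun ω => ?_
        have := (abs_le.1 (abs_exp_sub_one_sub_id_le (htV ω))).2
        linarith [mul_pow t (V ω) 2]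
    _ = 1 + t ^ 2 * ∫ ω, V ω ^ 2 ∂μ := by
        have h1 : Integrable (fun ω => 1 + t * V ω) μ := (integrable_const 1).add (hVi.const_mul t)
        rw [integral_add h1 (hV2i.const_mul _),
          integral_add (integrable_const 1) (hVi.const_mul t), integral_const_mul,
          integral_const_mul, h0]
        simp
    _ ≤ exp (t ^ 2 * ∫ ω, V ω ^ 2 ∂μ) := by linarith [add_one_le_exp (t ^ 2 * ∫ ω, V ω ^ 2 ∂μ)]

variable {V : ι → Ω → ℝ} {b v t : ℝ}

lemma measureReal_sum_ge_le (hV : ∀ j, Measurable (V j)) (hind : iIndepFun V μ)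
    (hb : ∀ j ω, |V j ω| ≤ b) (h0 : ∀ j, μ[V j] = 0) (hv : ∀ j, ∫ ω, V j ω ^ 2 ∂μ ≤ v)
    (ht : 0 ≤ t) (htb : t * b ≤ 1) (s : Finset ι) (x : ℝ) :
    μ.real {ω | x ≤ ∑ j ∈ s, V j ω} ≤ exp (-t * x + #s * t ^ 2 * v) := by
  have hmgf : ∀ j, mgf (V j) μ t ≤ exp (t ^ 2 * v) := fun j =>
    (mgf_le_exp_mul_integral_sq (hV j) (hb j) (h0 j) (by rwa [abs_of_nonneg ht])).trans
      (exp_le_exp.2 (by gcongr; exact hv j))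
  have hint : Integrable (fun ω => exp (t * (∑ j ∈ s, V j) ω)) μ :=
    hind.integrable_exp_mul_sum hV fun j _ => integrable_exp_mul_of_abs_le (hV j) fun ω => by
      rw [abs_mul, abs_of_nonneg ht]
      exact mul_le_mul_of_nonneg_left (hb j ω) ht
  calc μ.real {ω | x ≤ ∑ j ∈ s, V j ω} = μ.real {ω | x ≤ (∑ j ∈ s, V j) ω} := by
        simp only [Finset.sum_apply]
    _ ≤ exp (-t * x) * mgf (∑ j ∈ s, V j) μ t := measure_ge_le_exp_mul_mgf x ht hint
    _ ≤ exp (-t * x) * ∏ _j ∈ s, exp (t ^ 2 * v) := by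
        rw [hind.mgf_sum hV]
        gcongr with j
        exacts [fun j _ => mgf_nonneg, hmgf j]
    _ = exp (-t * x + #s * t ^ 2 * v) := by
        rw [prod_const, ← exp_nat_mul, ← exp_add]
        ring_nf

lemma measureReal_abs_sum_ge_le (hV : ∀ j, Measurable (V j)) (hind : iIndepFun V μ)
    (hb : ∀ j ω, |V j ω| ≤ b) (h0 : ∀ j, μ[V j] = 0) (hv : ∀ j, ∫ ω, V j ω ^ 2 ∂μ ≤ v)
    (ht : 0 ≤ t) (htb : t * b ≤ 1) (s : Finset ι) (x : ℝ) :
    μ.real {ω | x ≤ |∑ j ∈ s, V j ω|} ≤ 2 * exp (-t * x + #s * t ^ 2 * v) := by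
  have hneg := measureReal_sum_ge_le (V := fun j ω => -V j ω) (fun j => (hV j).neg)
    (hind.comp (fun _ => Neg.neg) fun _ => measurable_neg) (fun j ω => by simpa using hb j ω)
    (fun j => by simp [integral_neg, h0 j]) (fun j => by simpa using hv j) ht htb s x
  calc μ.real {ω | x ≤ |∑ j ∈ s, V j ω|}
      ≤ μ.real ({ω | x ≤ ∑ j ∈ s, V j ω} ∪ {ω | x ≤ ∑ j ∈ s, -V j ω}) := by
        refine measureReal_mono fun ω hω => ?_
        rcases le_abs.1 (show x ≤ _ from hω) with h | h
        · exact .inl h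
        · exact .inr (show x ≤ ∑ j ∈ s, -V j ω by rwa [sum_neg_distrib])
    _ ≤ _ := measureReal_union_le _ _
    _ ≤ 2 * exp (-t * x + #s * t ^ 2 * v) := by
        linarith [measureReal_sum_ge_le hV hind hb h0 hv ht htb s x]

end Bernstein

section Truncation

lemma abs_sub_truncation_le {α : Type*} (f : α → ℝ) {A r : ℝ} (hA : 0 < A) (hr : 1 ≤ r) (ω : α) :
    |f ω - truncation f A ω| ≤ |f ω| ^ r / A ^ (r - 1) := by
  by_cases h : f ω ∈ Set.Ioc (-A) A
  · simp only [truncation, Function.comp_apply, Set.indicator_of_mem h, id, sub_self, abs_zero]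
    positivity
  have hAf : A ≤ |f ω| := by
    rw [Set.mem_Ioc, not_and_or, not_lt, not_le] at h
    exact le_abs'.2 (h.imp id le_of_lt)
  have hf : 0 < |f ω| := hA.trans_le hAf
  simp only [truncation, Function.comp_apply, Set.indicator_of_notMem h, sub_zero]
  rw [le_div_iff₀ (rpow_pos_of_pos hA _)]
  calc |f ω| * A ^ (r - 1) ≤ |f ω| * |f ω| ^ (r - 1) := by
        gcongr
    _ = |f ω| ^ r := by rw [rpow_sub_one hf.ne', mul_div_cancel₀ _ hf.ne']

variable {Ω : Type*} [MeasurableSpace Ω] {μ : Measure Ω}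

lemma measureReal_abs_ge_le_integral_rpow_div [IsFiniteMeasure μ] {f : Ω → ℝ} {A r : ℝ}
    (hA : 0 < A) (hr : 0 ≤ r) (hmom : Integrable (fun ω => |f ω| ^ r) μ) :
    μ.real {ω | A ≤ |f ω|} ≤ (∫ ω, |f ω| ^ r ∂μ) / A ^ r := by
  rw [le_div_iff₀ (rpow_pos_of_pos hA r), mul_comm]
  calc A ^ r * μ.real {ω | A ≤ |f ω|} ≤ A ^ r * μ.real {ω | A ^ r ≤ |f ω| ^ r} := by
        refine mul_le_mul_of_nonneg_left (measureReal_mono fun ω hω => ?_) (by positivity)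
        exact rpow_le_rpow hA.le hω hr
    _ ≤ ∫ ω, |f ω| ^ r ∂μ :=
        mul_meas_ge_le_integral_of_nonneg (ae_of_all _ fun ω => by positivity) hmom _

lemma abs_integral_truncation_le [IsFiniteMeasure μ] {f : Ω → ℝ} (hf : Integrable f μ)
    (h0 : μ[f] = 0) {A r : ℝ} (hA : 0 < A) (hr : 1 ≤ r)
    (hmom : Integrable (fun ω => |f ω| ^ r) μ) :
    |μ[truncation f A]| ≤ (∫ ω, |f ω| ^ r ∂μ) / A ^ (r - 1) := by
  have ht : Integrable (truncation f A) μ := hf.aestronglyMeasurable.integrable_truncation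
  calc |μ[truncation f A]| = |∫ ω, (f ω - truncation f A ω) ∂μ| := by
        rw [integral_sub hf ht, h0, zero_sub, abs_neg]
    _ ≤ ∫ ω, |f ω - truncation f A ω| ∂μ := abs_integral_le_integral_abs
    _ ≤ ∫ ω, |f ω| ^ r / A ^ (r - 1) ∂μ :=
        integral_mono (hf.sub ht).abs (hmom.div_const _) (abs_sub_truncation_le f hA hr)
    _ = (∫ ω, |f ω| ^ r ∂μ) / A ^ (r - 1) := integral_div _ _

lemma integral_sq_sub_integral_truncation_le [IsProbabilityMeasure μ] {f : Ω → ℝ}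
    (hf : MemLp f 2 μ) (A : ℝ) :
    ∫ ω, (truncation f A ω - μ[truncation f A]) ^ 2 ∂μ ≤ ∫ ω, f ω ^ 2 ∂μ := by
  have hm := hf.aestronglyMeasurable
  calc _ = Var[truncation f A; μ] := (variance_eq_integral hm.truncation.aemeasurable).symm
    _ ≤ μ[truncation f A ^ 2] := variance_le_expectation_sq hm.truncation
    _ ≤ ∫ ω, f ω ^ 2 ∂μ :=
        integral_mono hm.memLp_truncation.integrable_sq hf.integrable_sq fun ω => by
          simpa only [Pi.pow_apply, sq_abs] using
            pow_le_pow_left₀ (abs_nonneg _) (abs_truncation_le_abs_self f A ω) 2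

end Truncation

lemma subset_biUnion_abs_ge_union_abs_sum_truncation_sub_ge {Ω ι : Type*} {Z : ι → Ω → ℝ}
    {a m c x : ℝ} (s : Finset ι) (hm : |m| ≤ c) :
    {ω | x + #s * c ≤ |∑ j ∈ s, Z j ω|} ⊆
      (⋃ j ∈ s, {ω | a ≤ |Z j ω|}) ∪ {ω | x ≤ |∑ j ∈ s, (truncation (Z j) a ω - m)|} := by
  intro ω (hω : x + #s * c ≤ |∑ j ∈ s, Z j ω|)
  by_cases hbig : ∃ j ∈ s, a ≤ |Z j ω|
  · obtain ⟨j, hj, h⟩ := hbig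
    exact .inl (Set.mem_biUnion hj h)
  simp only [not_exists, not_and, not_le] at hbig
  have hsum : ∑ j ∈ s, (truncation (Z j) a ω - m) = ∑ j ∈ s, Z j ω - #s * m := by
    rw [sum_sub_distrib, sum_const, nsmul_eq_mul,
      sum_congr rfl fun j hj => truncation_eq_self (hbig j hj)]
  refine .inr (show x ≤ _ from ?_)
  calc x ≤ |∑ j ∈ s, Z j ω| - #s * c := by linarith
    _ ≤ |∑ j ∈ s, Z j ω| - |#s * m| := by
        rw [abs_mul, Nat.abs_cast]
        gcongr
    _ ≤ _ := hsum ▸ abs_sub_abs_le_abs_sub _ _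

section RowSum

variable {Ω ι : Type*} [MeasurableSpace Ω] {μ : Measure Ω} [IsProbabilityMeasure μ]
  {Z : ι → Ω → ℝ} {W : Ω → ℝ} {a t : ℝ}

lemma measureReal_abs_sum_truncation_sub_ge_le (hZ : ∀ j, Measurable (Z j))
    (hind : iIndepFun Z μ) (hid : ∀ j, IdentDistrib (Z j) W μ μ) (hW : MemLp W 2 μ)
    (ha : 0 < a) (ht : 0 ≤ t) (hat : 2 * a * t ≤ 1) (s : Finset ι) (x : ℝ) :
    μ.real {ω | x ≤ |∑ j ∈ s, (truncation (Z j) a ω - μ[truncation W a])|} ≤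
      2 * exp (-t * x + #s * t ^ 2 * ∫ ω, W ω ^ 2 ∂μ) := by
  set m := μ[truncation W a]
  set g : ℝ → ℝ := fun y => Set.indicator (Set.Ioc (-a) a) id y - m
  have hg : Measurable g := (measurable_id.indicator measurableSet_Ioc).sub_const m
  have hm : |m| ≤ a := by
    simpa using norm_integral_le_of_norm_le_const (μ := μ) (f := truncation W a)
      (ae_of_all _ fun ω => (abs_truncation_le_bound W a ω).trans_eq (abs_of_pos ha))
  refine measureReal_abs_sum_ge_le (V := fun j => g ∘ Z j) (b := 2 * a)
    (fun j => hg.comp (hZ j)) (hind.comp (fun _ => g) fun _ => hg) (fun j ω => ?_)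
    (fun j => ?_) (fun j => ?_) ht (by linarith) s x
  · calc |truncation (Z j) a ω - m| ≤ |truncation (Z j) a ω| + |m| := abs_sub _ _
      _ ≤ a + a := add_le_add ((abs_truncation_le_bound _ _ _).trans_eq (abs_of_pos ha)) hm
      _ = 2 * a := by ring
  · rw [((hid j).comp hg).integral_eq]
    change ∫ ω, (truncation W a ω - m) ∂μ = 0
    rw [integral_sub hW.aestronglyMeasurable.integrable_truncation (integrable_const m),
      integral_const, probReal_univ, one_smul, sub_self]
  · exact ((hid j).comp (hg.pow_const 2)).integral_eq.trans_le
      (integral_sq_sub_integral_truncation_le hW a)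

lemma measureReal_abs_sum_ge_le_of_identDistrib (hZ : ∀ j, Measurable (Z j))
    (hind : iIndepFun Z μ) (hid : ∀ j, IdentDistrib (Z j) W μ μ) (hW : MemLp W 2 μ)
    (h0 : μ[W] = 0) {r : ℝ} (hr : 1 ≤ r) (hmom : Integrable (fun ω => |W ω| ^ r) μ)
    (ha : 0 < a) (ht : 0 ≤ t) (hat : 2 * a * t ≤ 1) (s : Finset ι) (x : ℝ) :
    μ.real {ω | x + #s * ((∫ ω, |W ω| ^ r ∂μ) / a ^ (r - 1)) ≤ |∑ j ∈ s, Z j ω|} ≤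
      #s * ((∫ ω, |W ω| ^ r ∂μ) / a ^ r) +
        2 * exp (-t * x + #s * t ^ 2 * ∫ ω, W ω ^ 2 ∂μ) := by
  set R := ∫ ω, |W ω| ^ r ∂μ
  set m := μ[truncation W a]
  have hm : |m| ≤ R / a ^ (r - 1) :=
    abs_integral_truncation_le (hW.integrable one_le_two) h0 ha hr hmom
  have hsub := subset_biUnion_abs_ge_union_abs_sum_truncation_sub_ge (Z := Z) (x := x) (a := a) s hm
  have hmarkov : ∀ j, μ.real {ω | a ≤ |Z j ω|} ≤ R / a ^ r := fun j => by
    have hset : MeasurableSet {y : ℝ | a ≤ |y|} := measurableSet_le measurable_const measurable_abs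
    change μ.real (Z j ⁻¹' {y | a ≤ |y|}) ≤ _
    rw [measureReal_def, (hid j).measure_mem_eq hset]
    exact measureReal_abs_ge_le_integral_rpow_div ha (by linarith) hmom
  calc _ ≤ μ.real ((⋃ j ∈ s, {ω | a ≤ |Z j ω|}) ∪
        {ω | x ≤ |∑ j ∈ s, (truncation (Z j) a ω - m)|}) := measureReal_mono hsub
    _ ≤ ∑ j ∈ s, μ.real {ω | a ≤ |Z j ω|} +
        μ.real {ω | x ≤ |∑ j ∈ s, (truncation (Z j) a ω - m)|} :=
        (measureReal_union_le _ _).trans (by gcongr; exact measureReal_biUnion_finset_le _ _)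
    _ ≤ ∑ _j ∈ s, R / a ^ r + 2 * exp (-t * x + #s * t ^ 2 * ∫ ω, W ω ^ 2 ∂μ) :=
        add_le_add (sum_le_sum fun j _ => hmarkov j)
          (measureReal_abs_sum_truncation_sub_ge_le hZ hind hid hW ha ht hat s x)
    _ = _ := by rw [sum_const, nsmul_eq_mul]

end RowSum

lemma exists_le_of_le_biSup {ι : Type*} {s : Finset ι} {f : ι → ℝ} {x : ℝ} (hx : 0 < x)
    (h : x ≤ ⨆ i ∈ s, f i) : ∃ i ∈ s, x ≤ f i := by
  by_contra! H
  rcases s.eq_empty_or_nonempty with rfl | hs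
  -- a real `⨆` over an empty index type is `0`
  · simp at h
    linarith
  refine (h.trans ?_).not_gt (max_lt ((s.sup'_lt_iff hs).2 H) hx)
  exact Real.iSup_le (fun i => Real.iSup_le (fun hi => le_max_of_le_left (le_sup' f hi))
    (le_max_right _ _)) (le_max_right _ _)

section MaxRowSum

variable {Ω ι : Type*} [MeasurableSpace Ω] {μ : Measure Ω}

lemma measureReal_le_biSup_le_sum [IsFiniteMeasure μ] {s : Finset ι} {f : ι → Ω → ℝ} {x : ℝ}
    (hx : 0 < x) :
    μ.real {ω | x ≤ ⨆ i ∈ s, f i ω} ≤ ∑ i ∈ s, μ.real {ω | x ≤ f i ω} := by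
  refine (measureReal_mono (fun ω hω => ?_) (measure_ne_top _ _)).trans
    (measureReal_biUnion_finset_le _ _)
  obtain ⟨i, hi, h⟩ := exists_le_of_le_biSup hx hω
  exact Set.mem_biUnion hi h

variable [IsProbabilityMeasure μ] {Y : ℕ → ℕ → Ω → ℝ} {W : Ω → ℝ} {r a d x : ℝ}

lemma measureReal_le_iSup_abs_row_sum_div_le (hY : ∀ i j, Measurable (Y i j))
    (hrow : ∀ i, iIndepFun (Y i) μ) (hid : ∀ i j, IdentDistrib (Y i j) W μ μ)
    (hW : MemLp W 2 μ) (h0 : μ[W] = 0) (hr : 1 ≤ r)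
    (hmom : Integrable (fun ω => |W ω| ^ r) μ) (ha : 0 < a) (hd : 0 < d) (hx : 0 < x) (n : ℕ)
    (hshift : n * ((∫ ω, |W ω| ^ r ∂μ) / a ^ (r - 1)) ≤ x * d / 2) :
    μ.real {ω | x ≤ ⨆ i ∈ range n, |(∑ j ∈ range n, Y i j ω) / d|} ≤
      n * (n * ((∫ ω, |W ω| ^ r ∂μ) / a ^ r) +
        2 * exp (-(x * d) / (4 * a) + n * (∫ ω, W ω ^ 2 ∂μ) / (4 * a ^ 2))) := by
  have hexp : -(x * d) / (4 * a) + n * (∫ ω, W ω ^ 2 ∂μ) / (4 * a ^ 2) =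
      -(1 / (2 * a)) * (x * d / 2) + n * (1 / (2 * a)) ^ 2 * ∫ ω, W ω ^ 2 ∂μ := by
    field_simp; ring
  have hrow_le : ∀ i, μ.real {ω | x ≤ |(∑ j ∈ range n, Y i j ω) / d|} ≤
      n * ((∫ ω, |W ω| ^ r ∂μ) / a ^ r) +
        2 * exp (-(x * d) / (4 * a) + n * (∫ ω, W ω ^ 2 ∂μ) / (4 * a ^ 2)) := fun i => by
    have key := measureReal_abs_sum_ge_le_of_identDistrib (hY i) (hrow i) (hid i) hW h0 hr hmom
      ha (t := 1 / (2 * a)) (by positivity) (by field_simp; rfl) (range n) (x * d / 2)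
    rw [card_range, ← hexp] at key
    refine le_trans (measureReal_mono fun ω (hω : x ≤ _) => ?_) key
    rw [abs_div, abs_of_pos hd, le_div_iff₀ hd] at hω
    show x * d / 2 + _ ≤ _
    linarith
  calc _ ≤ ∑ i ∈ range n, μ.real {ω | x ≤ |(∑ j ∈ range n, Y i j ω) / d|} :=
        measureReal_le_biSup_le_sum hx
    _ ≤ _ := (sum_le_sum fun i _ => hrow_le i).trans_eq
        (by rw [sum_const, card_range, nsmul_eq_mul])

end MaxRowSum

lemma tendsto_nat_mul_exp_neg_mul_rpow {b e : ℝ} (hb : 0 < b) (he : 0 < e) :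
    Tendsto (fun N : ℕ => (N : ℝ) * exp (-b * (N : ℝ) ^ e)) atTop (𝓝 0) := by
  have h := (tendsto_rpow_mul_exp_neg_mul_atTop_nhds_zero (1 / e) b hb).comp
    ((tendsto_rpow_atTop he).comp tendsto_natCast_atTop_atTop)
  refine h.congr fun N => ?_
  simp only [Function.comp_apply]
  rw [← rpow_mul (Nat.cast_nonneg N), mul_one_div_cancel he.ne', rpow_one]

lemma tendsto_nat_mul_nat_mul_div_rpow_rpow {γ r : ℝ} (h : 2 < γ * r) (R : ℝ) :
    Tendsto (fun N : ℕ => (N : ℝ) * ((N : ℝ) * (R / ((N : ℝ) ^ γ) ^ r))) atTop (𝓝 0) := by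
  have h := ((tendsto_rpow_neg_atTop (sub_pos.2 h)).comp tendsto_natCast_atTop_atTop).const_mul R
  rw [mul_zero] at h
  refine h.congr' ((eventually_gt_atTop 0).mono fun N hN => ?_)
  have hN' : (0 : ℝ) < N := Nat.cast_pos.2 hN
  simp only [Function.comp_apply]
  rw [← rpow_mul hN'.le, neg_sub, rpow_sub hN', rpow_two]
  ring

lemma memLp_ofReal_of_integrable_abs_rpow {Ω : Type*} [MeasurableSpace Ω] {μ : Measure Ω}
    {f : Ω → ℝ} (hf : AEStronglyMeasurable f μ) {p : ℝ} (hp : 0 < p)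
    (h : Integrable (fun ω => |f ω| ^ p) μ) : MemLp f (ENNReal.ofReal p) μ :=
  (integrable_norm_rpow_iff hf (by simpa using hp) ENNReal.ofReal_ne_top).1
    (by simpa [ENNReal.toReal_ofReal hp.le] using h)

section Tail

variable {Ω : Type*} [MeasurableSpace Ω] {μ : Measure Ω} [IsProbabilityMeasure μ]
  {Y : ℕ → ℕ → Ω → ℝ} {W : Ω → ℝ} {r α : ℝ}

lemma measureReal_le_iSup_abs_row_sum_div_sqrt_le (hY : ∀ i j, Measurable (Y i j))
    (hrow : ∀ i, iIndepFun (Y i) μ) (hid : ∀ i j, IdentDistrib (Y i j) W μ μ)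
    (hW : MemLp W 2 μ) (h0 : μ[W] = 0) (hr : 1 ≤ r)
    (hmom : Integrable (fun ω => |W ω| ^ r) μ) (hα : 0 < α) {β γ δ : ℝ}
    (hβγ : γ + δ = β + 1 / 2) (hγ : 1 ≤ 2 * γ) (hδ : 0 ≤ δ) {N : ℕ} (hN : 1 ≤ N)
    (hsmall : N * (N * ((∫ ω, |W ω| ^ r ∂μ) / ((N : ℝ) ^ γ) ^ r)) ≤ α / 2) :
    μ.real {ω | α * (N : ℝ) ^ β ≤ ⨆ i ∈ range N, |(∑ j ∈ range N, Y i j ω) / √(N : ℝ)|} ≤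
      N * (N * ((∫ ω, |W ω| ^ r ∂μ) / ((N : ℝ) ^ γ) ^ r)) +
        2 * exp ((∫ ω, W ω ^ 2 ∂μ) / 4) * (N * exp (-(α / 4) * (N : ℝ) ^ δ)) := by
  set R := ∫ ω, |W ω| ^ r ∂μ
  set v := ∫ ω, W ω ^ 2 ∂μ
  have hv : 0 ≤ v := integral_nonneg fun ω => sq_nonneg _
  have hN1 : (1 : ℝ) ≤ N := Nat.one_le_cast.2 hN
  have hN0 : (0 : ℝ) < N := by linarith
  set a := (N : ℝ) ^ γ
  have ha : 0 < a := rpow_pos_of_pos hN0 γ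
  have hscale : a * (N : ℝ) ^ δ = (N : ℝ) ^ β * √(N : ℝ) := by
    rw [← rpow_add hN0, sqrt_eq_rpow, ← rpow_add hN0, hβγ]
  have hNa : (N : ℝ) ≤ a ^ 2 := by
    rw [← rpow_natCast, ← rpow_mul hN0.le]
    simpa using rpow_le_rpow_of_exponent_le hN1 (by push_cast; linarith : (1 : ℝ) ≤ γ * (2 : ℕ))
  have hshift : N * (R / a ^ (r - 1)) ≤ α * (N : ℝ) ^ β * √(N : ℝ) / 2 := by
    have hR : 0 ≤ R := integral_nonneg fun ω => by positivity
    calc N * (R / a ^ (r - 1)) = N * (R / a ^ r) * a := by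
          rw [rpow_sub_one ha.ne']; field_simp
      _ ≤ α / 2 * (a * (N : ℝ) ^ δ) := by
          gcongr
          · exact (le_mul_of_one_le_left (by positivity) hN1).trans hsmall
          · exact le_mul_of_one_le_right ha.le (one_le_rpow hN1 hδ)
      _ = _ := by rw [hscale]; ring
  have hexp : -(α * (N : ℝ) ^ β * √(N : ℝ)) / (4 * a) + N * v / (4 * a ^ 2) ≤
      v / 4 + -(α / 4) * (N : ℝ) ^ δ := by
    rw [mul_assoc, ← hscale]
    have : N * v / (4 * a ^ 2) ≤ v / 4 := by
      rw [div_le_div_iff₀ (by positivity) four_pos]; nlinarith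
    field_simp at this ⊢
    linarith
  calc _ ≤ _ := measureReal_le_iSup_abs_row_sum_div_le hY hrow hid hW h0 hr hmom ha
        (sqrt_pos.2 hN0) (mul_pos hα (rpow_pos_of_pos hN0 β)) N hshift
    _ ≤ N * (N * (R / a ^ r) + 2 * (exp (v / 4) * exp (-(α / 4) * (N : ℝ) ^ δ))) := by
        rw [← exp_add]; gcongr
    _ = _ := by ring

theorem tendsto_measure_le_iSup_abs_row_sum_div_sqrt (hY : ∀ i j, Measurable (Y i j))
    (hrow : ∀ i, iIndepFun (Y i) μ) (hid : ∀ i j, IdentDistrib (Y i j) W μ μ)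
    (hW : MemLp W 2 μ) (h0 : μ[W] = 0) (hr : 3 ≤ r)
    (hmom : Integrable (fun ω => |W ω| ^ r) μ) {ε : ℝ} (hε : 0 < ε) (hα : 0 < α) :
    Tendsto (fun N : ℕ => μ {ω | α * (N : ℝ) ^ (1 / (2 * r) + ε) ≤
      ⨆ i ∈ range N, |(∑ j ∈ range N, Y i j ω) / √(N : ℝ)|}) atTop (𝓝 0) := by
  set γ := 1 / (2 * r) + 1 / 2 + ε / 2
  have hγr : 2 < γ * r := by
    have : γ * r = 1 / 2 + r / 2 + r * ε / 2 := by simp only [γ]; field_simp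
    nlinarith
  have hγ : 1 ≤ 2 * γ := by
    have : 0 < 1 / (2 * r) := by positivity
    simp only [γ]
    linarith
  have hmarkov := tendsto_nat_mul_nat_mul_div_rpow_rpow hγr (∫ ω, |W ω| ^ r ∂μ)
  have hbound := (hmarkov.eventually (ge_mem_nhds (half_pos hα))).and (eventually_ge_atTop 1)
    |>.mono fun N hN => measureReal_le_iSup_abs_row_sum_div_sqrt_le hY hrow hid hW h0
      (by linarith) hmom hα (β := 1 / (2 * r) + ε) (by simp only [γ]; ring) hγ (half_pos hε).le
      hN.2 hN.1
  have hg := hmarkov.add ((tendsto_nat_mul_exp_neg_mul_rpow (div_pos hα four_pos)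
    (half_pos hε)).const_mul (2 * exp ((∫ ω, W ω ^ 2 ∂μ) / 4)))
  rw [mul_zero, add_zero] at hg
  refine tendsto_of_tendsto_of_tendsto_of_le_of_le' tendsto_const_nhds
    (ENNReal.ofReal_zero ▸ ENNReal.tendsto_ofReal hg) (Eventually.of_forall fun _ => zero_le) ?_
  filter_upwards [hbound] with N hN
  rw [← ofReal_measureReal]
  exact ENNReal.ofReal_le_ofReal hN

end Tail

theorem max_row_sum_big_O_p_general
    {Ω : Type} [MeasurableSpace Ω] (P : Measure Ω) [IsProbabilityMeasure P]
    (Y : ℕ → ℕ → Ω → ℝ)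
    (hmeas : ∀ i j, Measurable (Y i j))
    (hiid : iIndepFun
      (fun p : ℕ × ℕ => Y p.1 p.2) P)
    (hident : ∀ p q : ℕ × ℕ, IdentDistrib (Y p.1 p.2) (Y q.1 q.2) P P)
    (hmean : ∫ ω, Y 0 0 ω ∂P = 0)
    (r : ℝ) (hr : 3 ≤ r)
    (hmom : Integrable (fun ω => |Y 0 0 ω| ^ r) P)
    (ε : ℝ) (hε : 0 < ε) :
    (∀ δ : ℝ, 0 < δ → ∃ M : ℝ, 0 < M ∧ ∀ᶠ N : ℕ in atTop,
        P {ω | M * (N : ℝ) ^ (1 / (2 * r) + ε) <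
            ⨆ i ∈ Finset.range N,
              |(∑ j ∈ Finset.range N, Y i j ω) / Real.sqrt (N : ℝ)|} < ENNReal.ofReal δ)
    ∧
    (∀ α : ℝ, 0 < α →
      Tendsto (fun N : ℕ =>
          P {ω | α * (N : ℝ) ^ (1 / (2 * r) + ε) ≤
              ⨆ i ∈ Finset.range N,
                |(∑ j ∈ Finset.range N, Y i j ω) / Real.sqrt (N : ℝ)|})
        atTop (𝓝 0)) := by
  have hW : MemLp (Y 0 0) 2 P :=
    (memLp_ofReal_of_integrable_abs_rpow (hmeas 0 0).aestronglyMeasurable (by linarith)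
      hmom).mono_exponent (ENNReal.ofReal_ofNat 2 ▸ ENNReal.ofReal_le_ofReal (by linarith))
  have hrow : ∀ i, iIndepFun (Y i) P := fun i =>
    hiid.precomp (g := fun j => (i, j)) fun j k h => (Prod.mk.inj h).2
  have htail := fun α (hα : 0 < α) => tendsto_measure_le_iSup_abs_row_sum_div_sqrt hmeas hrow
    (fun i j => hident (i, j) (0, 0)) hW hmean hr hmom hε hα
  refine ⟨fun δ hδ => ⟨1, one_pos, ?_⟩, htail⟩
  filter_upwards [(htail 1 one_pos).eventually_lt_const (ENNReal.ofReal_pos.2 hδ)] with N hN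
  exact (measure_mono (Set.ofPred_subset_ofPred.2 fun _ => le_of_lt)).trans_lt hN

/-- **Lemma 2.** For an i.i.d. array `Y_{ij}` with mean 0, variance 1 and
`E|Y_{11}|^r < ∞` for some `r ≥ 3`, setting `X_{in} = n^{-1/2} Σ_{j<n} Y_{ij}`, one has
`max_{i<n} |X_{in}| = O_p(n^{1/(2r)+ε})` for every `ε > 0`; in particular, for every
`α > 0`, `P(max_{i<n} |X_{in}| ≥ α n^{1/(2r)+ε}) → 0`. -/
theorem max_row_sum_big_O_p
    {Ω : Type} [MeasurableSpace Ω] (P : Measure Ω) [IsProbabilityMeasure P]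
    (Y : ℕ → ℕ → Ω → ℝ)
    (hmeas : ∀ i j, Measurable (Y i j))
    (hiid : iIndepFun
      (fun p : ℕ × ℕ => Y p.1 p.2) P)
    (hident : ∀ p q : ℕ × ℕ, IdentDistrib (Y p.1 p.2) (Y q.1 q.2) P P)
    (hmean : ∫ ω, Y 0 0 ω ∂P = 0)
    (hvar : ∫ ω, (Y 0 0 ω) ^ 2 ∂P = 1)
    (r : ℝ) (hr : 3 ≤ r)
    (hmom : Integrable (fun ω => |Y 0 0 ω| ^ r) P)
    (ε : ℝ) (hε : 0 < ε) :
    (∀ δ : ℝ, 0 < δ → ∃ M : ℝ, 0 < M ∧ ∀ᶠ N : ℕ in atTop,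
        P {ω | M * (N : ℝ) ^ (1 / (2 * r) + ε) <
            ⨆ i ∈ Finset.range N,
              |(∑ j ∈ Finset.range N, Y i j ω) / Real.sqrt (N : ℝ)|} < ENNReal.ofReal δ)
    ∧
    (∀ α : ℝ, 0 < α →
      Tendsto (fun N : ℕ =>
          P {ω | α * (N : ℝ) ^ (1 / (2 * r) + ε) ≤
              ⨆ i ∈ Finset.range N,
                |(∑ j ∈ Finset.range N, Y i j ω) / Real.sqrt (N : ℝ)|})
        atTop (𝓝 0)) :=
  max_row_sum_big_O_p_general P Y hmeas hiid hident hmean r hr hmom ε hε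
end

section
/- Let ν be a real random variable with E(ν) = 0 and E(ν⁴) < ∞. Let U = (u_1,…,u_T) and V = (v_1,…,v_T) be independent random vectors whose entries are i.i.d. copies of ν, and let x = (x_1,…,x_T) ∈ R^T be a deterministic vector. Then E[(U·V)²(U·x)²] = E(ν²)·{E(ν⁴) + (T−1)[E(ν²)]²}·Σ_{t=1}^T x_t². -/
/-!
Write `σ² = E ν²`. Expanding `(U·V)²` and using the independence of `U` and `V`, each term
factors as `E[u_t u_t' (U·x)²] · E[v_t v_t']`, and `E[v_t v_t'] = σ² δ_{tt'}` because the entries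
are centred. This leaves `σ² Σ_t E[u_t² (U·x)²]`. Expanding `(U·x)²`, the mixed moment `E[u_t² u_s u_s']`
vanishes unless `s = s'` (a lone centred factor is independent of the rest), and equals `E ν⁴` or
`σ⁴` according as `s = t` or not; summing over `t` contributes `E ν⁴ + (T - 1) σ⁴` per `x_s²`.
Every term is integrable by Hölder in `L⁴` for the `U`-factors and independence for the `V`-factors.
-/

open MeasureTheory ProbabilityTheory

open scoped ENNReal

instance : ENNReal.HolderTriple (4 : ℝ≥0∞) 4 2 where
  inv_add_inv_eq_inv := by
    rw [← two_mul, show (4 : ℝ≥0∞) = 2 * 2 by norm_num, ENNReal.mul_inv (by simp) (by simp),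
      ← mul_assoc, ENNReal.mul_inv_cancel (by simp) (by simp), one_mul]

section LpFour

variable {α : Type*} [MeasurableSpace α] {μ : Measure α}

lemma memLp_four_of_integrable_pow {f : α → ℝ} (hf : AEStronglyMeasurable f μ)
    (h : Integrable (fun x => f x ^ 4) μ) : MemLp f 4 μ := by
  refine (integrable_norm_rpow_iff hf (by norm_num) (by norm_num)).1 ?_
  have h4 : ((4 : ℝ≥0∞).toReal) = ((4 : ℕ) : ℝ) := by norm_num
  simp_rw [h4, Real.rpow_natCast, Real.norm_eq_abs, pow_abs]
  exact h.abs

lemma MeasureTheory.MemLp.integrable_mul_mul_mul {𝕜 : Type*} [NormedCommRing 𝕜] {f g h k : α → 𝕜}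
    (hf : MemLp f 4 μ) (hg : MemLp g 4 μ) (hh : MemLp h 4 μ) (hk : MemLp k 4 μ) :
    Integrable (fun x => f x * g x * h x * k x) μ := by
  have := (hg.mul (r := 2) hf).integrable_mul (hk.mul (r := 2) hh)
  exact this.congr (.of_forall fun x => by simp only [Pi.mul_apply]; ring)

end LpFour

lemma ProbabilityTheory.IdentDistrib.integral_pow_eq {α β : Type*} [MeasurableSpace α]
    [MeasurableSpace β] {μ : Measure α} {μ' : Measure β} {f : α → ℝ} {g : β → ℝ}
    (h : IdentDistrib f g μ μ') (k : ℕ) : ∫ x, f x ^ k ∂μ = ∫ x, g x ^ k ∂μ' :=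
  (h.comp (measurable_id.pow_const k)).integral_eq

section Moments

variable {Ω ι : Type*} [MeasurableSpace Ω] {P : Measure Ω} {X : ι → Ω → ℝ} {ν : Ω → ℝ}

lemma ProbabilityTheory.iIndepFun.indepFun_inl_inr {κ β : Type*} [MeasurableSpace β]
    {f : ι ⊕ κ → Ω → β} (h : iIndepFun f P) (hf : ∀ j, Measurable (f j)) :
    IndepFun (fun ω i => f (.inl i) ω) (fun ω k => f (.inr k) ω) P := by
  have hblocks := indep_iSup_of_disjoint (fun j => (hf j).comap_le) h.iIndep
    Set.isCompl_range_inl_range_inr.disjoint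
  rw [IndepFun_iff_Indep]
  refine indep_of_indep_of_le_right (indep_of_indep_of_le_left hblocks ?_) ?_ <;>
    simp_rw [MeasurableSpace.pi, MeasurableSpace.comap_iSup, MeasurableSpace.comap_comp,
      Function.comp_def, iSup_le_iff] <;>
    exact fun i => le_iSup₂_of_le _ ⟨i, rfl⟩ le_rfl

variable (hX : iIndepFun X P) (hmeas : ∀ i, Measurable (X i))
  (hident : ∀ i, IdentDistrib (X i) ν P P) (hmean : ∫ ω, ν ω ∂P = 0)
include hX hmeas hident hmean

lemma integral_mul_eq_ite [DecidableEq ι] (i j : ι) :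
    ∫ ω, X i ω * X j ω ∂P = if i = j then ∫ ω, ν ω ^ 2 ∂P else 0 := by
  split_ifs with hij
  · subst hij
    simpa [sq] using (hident i).integral_pow_eq 2
  · rw [(hX.indepFun hij).integral_fun_mul_eq_mul_integral (hmeas i).aestronglyMeasurable
      (hmeas j).aestronglyMeasurable, (hident j).integral_eq, hmean, mul_zero]

lemma integral_sq_mul_mul_eq_zero {t r k : ι} (hkt : k ≠ t) (hkr : k ≠ r) :
    ∫ ω, X t ω ^ 2 * X r ω * X k ω ∂P = 0 := by
  have hindep : IndepFun (fun ω => X t ω ^ 2 * X r ω) (X k) P :=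
    (hX.indepFun_prodMk hmeas t r k hkt.symm hkr.symm).comp
      (φ := fun p : ℝ × ℝ => p.1 ^ 2 * p.2) (by fun_prop) measurable_id
  rw [hindep.integral_fun_mul_eq_mul_integral (by fun_prop) (hmeas k).aestronglyMeasurable,
    (hident k).integral_eq, hmean, mul_zero]

lemma integral_sq_mul_mul_eq_ite [DecidableEq ι] (t s s' : ι) :
    ∫ ω, X t ω ^ 2 * X s ω * X s' ω ∂P =
      if s = s' then (if s = t then ∫ ω, ν ω ^ 4 ∂P else (∫ ω, ν ω ^ 2 ∂P) ^ 2) else 0 := by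
  split_ifs with hss hst
  · subst hss hst
    simpa [pow_succ, mul_assoc] using (hident s).integral_pow_eq 4
  · subst hss
    have hindep : IndepFun (fun ω => X t ω ^ 2) (fun ω => X s ω ^ 2) P :=
      (hX.indepFun (Ne.symm hst)).comp (measurable_id.pow_const 2) (measurable_id.pow_const 2)
    simp_rw [mul_assoc, ← sq]
    rw [hindep.integral_fun_mul_eq_mul_integral (by fun_prop) (by fun_prop),
      (hident t).integral_pow_eq, (hident s).integral_pow_eq, sq]
  · by_cases hst : s = t
    · subst hst
      exact integral_sq_mul_mul_eq_zero hX hmeas hident hmean (Ne.symm hss) (Ne.symm hss)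
    · simp_rw [mul_right_comm _ (X s _)]
      exact integral_sq_mul_mul_eq_zero hX hmeas hident hmean hst hss

lemma integral_sq_mul_sq_sum_mul [Fintype ι] [DecidableEq ι] (hν4 : MemLp ν 4 P)
    (x : ι → ℝ) (t : ι) :
    ∫ ω, X t ω ^ 2 * (∑ s, X s ω * x s) ^ 2 ∂P =
      ∑ s, x s ^ 2 * if s = t then ∫ ω, ν ω ^ 4 ∂P else (∫ ω, ν ω ^ 2 ∂P) ^ 2 := by
  have hexpand : ∀ ω, X t ω ^ 2 * (∑ s, X s ω * x s) ^ 2 =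
      ∑ s, ∑ s', x s * x s' * (X t ω ^ 2 * X s ω * X s' ω) := by
    intro ω
    simp_rw [sq, Finset.sum_mul_sum, Finset.mul_sum]
    exact Finset.sum_congr rfl fun s _ => Finset.sum_congr rfl fun s' _ => by ring
  have hX4 : ∀ i, MemLp (X i) 4 P := fun i => (hident i).memLp_iff.2 hν4
  have hint : ∀ s s', Integrable (fun ω => X t ω ^ 2 * X s ω * X s' ω) P := fun s s' => by
    simpa [sq] using (hX4 t).integrable_mul_mul_mul (hX4 t) (hX4 s) (hX4 s')
  simp_rw [hexpand]
  rw [integral_finsetSum _ fun s _ => integrable_finsetSum _ fun s' _ => (hint s s').const_mul _]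
  simp_rw [integral_finsetSum _ fun s' _ => (hint _ s').const_mul _, integral_const_mul,
    integral_sq_mul_mul_eq_ite hX hmeas hident hmean, mul_ite, mul_zero, Finset.sum_ite_eq,
    Finset.mem_univ, if_true, sq]

end Moments

lemma Fintype.sum_ite_eq_add_card_sub_one_mul {ι R : Type*} [Fintype ι] [DecidableEq ι] [Ring R]
    (s : ι) (a b : R) :
    ∑ t, (if s = t then a else b) = a + ((Fintype.card ι : R) - 1) * b := by
  rw [← Finset.add_sum_erase _ _ (Finset.mem_univ s), if_pos rfl,
    Finset.sum_congr rfl fun t ht => if_neg (Finset.ne_of_mem_erase ht).symm, Finset.sum_const,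
    Finset.card_erase_of_mem (Finset.mem_univ s), Finset.card_univ, nsmul_eq_mul,
    Nat.cast_sub (Fintype.card_pos_iff.2 ⟨s⟩), Nat.cast_one]

theorem integral_sq_inner_mul_sq_inner {Ω ι : Type*} [MeasurableSpace Ω] {P : Measure Ω}
    [IsProbabilityMeasure P] [Fintype ι] [DecidableEq ι] {U V : ι → Ω → ℝ} {ν : Ω → ℝ}
    (hU : iIndepFun U P) (hV : iIndepFun V P)
    (hUV : IndepFun (fun ω i => U i ω) (fun ω i => V i ω) P)
    (hUmeas : ∀ i, Measurable (U i)) (hVmeas : ∀ i, Measurable (V i))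
    (hUident : ∀ i, IdentDistrib (U i) ν P P) (hVident : ∀ i, IdentDistrib (V i) ν P P)
    (hmean : ∫ ω, ν ω ∂P = 0) (hν4 : MemLp ν 4 P) (x : ι → ℝ) :
    ∫ ω, (∑ t, U t ω * V t ω) ^ 2 * (∑ t, U t ω * x t) ^ 2 ∂P =
      (∫ ω, ν ω ^ 2 ∂P) * ((∫ ω, ν ω ^ 4 ∂P) + ((Fintype.card ι : ℝ) - 1) *
        (∫ ω, ν ω ^ 2 ∂P) ^ 2) * ∑ t, x t ^ 2 := by
  have hU4 : ∀ i, MemLp (U i) 4 P := fun i => (hUident i).memLp_iff.2 hν4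
  have hV4 : ∀ i, MemLp (V i) 4 P := fun i => (hVident i).memLp_iff.2 hν4
  have hUx : MemLp (fun ω => ∑ s, U s ω * x s) 4 P :=
    memLp_finsetSum _ fun s _ => (hU4 s).mul_const (x s)
  have hterm : ∀ t t',
      Integrable (fun ω => U t ω * U t' ω * (∑ s, U s ω * x s) ^ 2 * (V t ω * V t' ω)) P ∧
      ∫ ω, U t ω * U t' ω * (∑ s, U s ω * x s) ^ 2 * (V t ω * V t' ω) ∂P =
        (∫ ω, U t ω * U t' ω * (∑ s, U s ω * x s) ^ 2 ∂P) * ∫ ω, V t ω * V t' ω ∂P := by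
    intro t t'
    have hindep := hUV.comp (φ := fun u => u t * u t' * (∑ s, u s * x s) ^ 2)
      (ψ := fun v => v t * v t') (by fun_prop) (by fun_prop)
    refine ⟨hindep.integrable_mul ?_ ?_,
      hindep.integral_fun_mul_eq_mul_integral (by fun_prop) (by fun_prop)⟩
    · simpa [sq, mul_assoc, Function.comp_def] using
        (hU4 t).integrable_mul_mul_mul (hU4 t') hUx hUx
    · exact ((hV4 t').mul (r := 2) (hV4 t)).integrable (by norm_num)
  calc _ = ∫ ω, ∑ t, ∑ t', U t ω * U t' ω * (∑ s, U s ω * x s) ^ 2 * (V t ω * V t' ω) ∂P := by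
        refine integral_congr_ae (.of_forall fun ω => ?_)
        dsimp only
        rw [sq (∑ t, U t ω * V t ω), Finset.sum_mul_sum, Finset.sum_mul]
        refine Finset.sum_congr rfl fun t _ => ?_
        rw [Finset.sum_mul]
        exact Finset.sum_congr rfl fun t' _ => by ring
    _ = ∑ t, ∑ t', (∫ ω, U t ω * U t' ω * (∑ s, U s ω * x s) ^ 2 ∂P) *
          ∫ ω, V t ω * V t' ω ∂P := by
        rw [integral_finsetSum _ fun t _ => integrable_finsetSum _ fun t' _ => (hterm t t').1]
        simp_rw [integral_finsetSum _ fun t' _ => (hterm _ t').1, (hterm _ _).2]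
    _ = ∑ t, (∫ ω, ν ω ^ 2 ∂P) * ∫ ω, U t ω ^ 2 * (∑ s, U s ω * x s) ^ 2 ∂P := by
        simp_rw [integral_mul_eq_ite hV hVmeas hVident hmean, mul_ite, mul_zero,
          Finset.sum_ite_eq, Finset.mem_univ, if_true, sq, mul_comm]
    _ = _ := by
        simp_rw [integral_sq_mul_sq_sum_mul hU hUmeas hUident hmean hν4, Finset.mul_sum]
        rw [Finset.sum_comm]
        simp_rw [← Finset.mul_sum, Fintype.sum_ite_eq_add_card_sub_one_mul]
        rw [Finset.mul_sum, Finset.mul_sum]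
        exact Finset.sum_congr rfl fun s _ => by ring

/-- Moment identity: if `U = (u_1,…,u_T)` and `V = (v_1,…,v_T)` have i.i.d. entries
distributed as a centred `ν` with finite fourth moment (all `2T` entries independent),
and `x ∈ ℝ^T` is deterministic, then
`E[(U·V)²(U·x)²] = E(ν²)·{E(ν⁴) + (T−1)[E(ν²)]²}·Σ_t x_t²`. -/
theorem moment_identity_inner_products
    {Ω : Type} [MeasurableSpace Ω] (P : Measure Ω) [IsProbabilityMeasure P]
    (T : ℕ) (w : Fin T ⊕ Fin T → Ω → ℝ) (ν₀ : Ω → ℝ)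
    (hν₀ : Measurable ν₀)
    (hmeas : ∀ j, Measurable (w j))
    (hindep : iIndepFun w P)
    (hident : ∀ j, IdentDistrib (w j) ν₀ P P)
    (hmean : ∫ ω, ν₀ ω ∂P = 0)
    (hmom4 : Integrable (fun ω => (ν₀ ω) ^ 4) P)
    (x : Fin T → ℝ) :
    ∫ ω, (∑ t, w (Sum.inl t) ω * w (Sum.inr t) ω) ^ 2 *
        (∑ t, w (Sum.inl t) ω * x t) ^ 2 ∂P
      = (∫ ω, (ν₀ ω) ^ 2 ∂P) *
          ((∫ ω, (ν₀ ω) ^ 4 ∂P) + ((T : ℝ) - 1) * (∫ ω, (ν₀ ω) ^ 2 ∂P) ^ 2) *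
          (∑ t, (x t) ^ 2) := by
  simpa using integral_sq_inner_mul_sq_inner (hindep.precomp Sum.inl_injective)
    (hindep.precomp Sum.inr_injective) (hindep.indepFun_inl_inr hmeas) (fun _ => hmeas _)
    (fun _ => hmeas _) (fun _ => hident _) (fun _ => hident _) hmean
    (memLp_four_of_integrable_pow hν₀.aestronglyMeasurable hmom4) x
end
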